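/- Let 2 ≤ n ≤ 9 and η ∈ [0,1]. For every finitely supported function T : ℤ^n → ℝ^n there exists a finitely supported function T' : ℤ^n → ℝ^n such that T'_α = 0 whenever max_i |α_i| ≥ 2, such that ∑_{α ∈ ℤ^n} α ⊗ T'_α = ∑_{α ∈ ℤ^n} α ⊗ T_α as n×n matrices, and such that ∑_{α ∈ ℤ^n} ψ̃(α, T'_α) ≤ ∑_{α ∈ ℤ^n} ψ̃(α, T_α). -/

import Mathlib

noncomputable def psiT (n : ℕ) (η : ℝ) (b T : EuclideanSpace ℝ (Fin n)) : ℝ :=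
  ‖T‖ * ‖b‖ ^ 2 + η * (inner ℝ b T : ℝ) ^ 2 / ‖T‖

noncomputable def intoE (n : ℕ) (b : Fin n → ℤ) : EuclideanSpace ℝ (Fin n) :=
  WithLp.toLp 2 (fun i => (b i : ℝ))

variable {n : ℕ} {η : ℝ}

lemma interp (p q a c r M : ℝ) (hp : 0 ≤ p) (hq : 0 ≤ q) (ha : 0 < a)
    (h1 : a ≤ r) (h2 : r ≤ c)
    (hA : p * a + q / a ≤ M) (hC : p * c + q / c ≤ M) :
    p * r + q / r ≤ M := by
  have hr : 0 < r := lt_of_lt_of_le ha h1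
  have hc : 0 < c := lt_of_lt_of_le hr h2
  rcases le_or_gt q (p * r * a) with h | h
  · have key : p * r + q / r - (p * c + q / c) = (c - r) * (q - p * r * c) / (r * c) := by
      field_simp; ring
    have h2' : q - p * r * c ≤ 0 := by nlinarith
    have : (c - r) * (q - p * r * c) / (r * c) ≤ 0 := by
      apply div_nonpos_of_nonpos_of_nonneg
      · nlinarith
      · positivity
    linarith
  · have key : p * r + q / r - (p * a + q / a) = (r - a) * (p * r * a - q) / (r * a) := by
      field_simp; ring
    have : (r - a) * (p * r * a - q) / (r * a) ≤ 0 := by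
      apply div_nonpos_of_nonpos_of_nonneg
      · nlinarith
      · positivity
    linarith



lemma psiT_zero (b : EuclideanSpace ℝ (Fin n)) : psiT n η b 0 = 0 := by
  simp [psiT]

lemma psiT_nonneg (hη : 0 ≤ η) (b T : EuclideanSpace ℝ (Fin n)) : 0 ≤ psiT n η b T := by
  have h1 : (0:ℝ) ≤ ‖T‖ := norm_nonneg T
  have h2 : (0:ℝ) ≤ ‖b‖ := norm_nonneg b
  unfold psiT
  positivity

lemma psiT_smul (b T : EuclideanSpace ℝ (Fin n)) (c : ℝ) :
    psiT n η b (c • T) = |c| * psiT n η b T := by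
  rcases eq_or_ne T 0 with rfl | hT
  · simp [psiT]
  rcases eq_or_ne c 0 with rfl | hc
  · simp [psiT]
  have ht : ‖T‖ ≠ 0 := norm_ne_zero_iff.mpr hT
  have hc' : |c| ≠ 0 := abs_ne_zero.mpr hc
  have h1 : ‖c • T‖ = |c| * ‖T‖ := by
    rw [norm_smul, Real.norm_eq_abs]
  have h2 : (inner ℝ b (c • T) : ℝ) = c * inner ℝ b T := real_inner_smul_right b T c
  have h3 : c ^ 2 = |c| ^ 2 := (sq_abs c).symm
  unfold psiT
  rw [h1, h2, mul_pow, h3]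
  field_simp

lemma intoE_single (i : Fin n) :
    intoE n (Pi.single i 1) = EuclideanSpace.single i (1:ℝ) := by
  ext j
  simp [intoE, Pi.single_apply, EuclideanSpace.single_apply, apply_ite]

lemma psiT_single (hη : 0 ≤ η) (i : Fin n) (t : EuclideanSpace ℝ (Fin n)) :
    psiT n η (intoE n (Pi.single i 1)) t = ‖t‖ + η * (t i) ^ 2 / ‖t‖ := by
  rw [intoE_single]
  unfold psiT
  rw [show ‖EuclideanSpace.single i (1:ℝ)‖ = 1 by simp [EuclideanSpace.norm_single]]
  rw [show (inner ℝ (EuclideanSpace.single i (1:ℝ)) t : ℝ) = t i by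
    simp [EuclideanSpace.inner_single_left]]
  ring

lemma norm_sq_eq_sum (t : EuclideanSpace ℝ (Fin n)) : ‖t‖ ^ 2 = ∑ i, (t i) ^ 2 := by
  rw [EuclideanSpace.norm_eq, Real.sq_sqrt (by positivity)]
  simp [Real.norm_eq_abs, sq_abs]

lemma sum_psiT_single_le (hη0 : 0 ≤ η) (hη1 : η ≤ 1) (α : Fin n → ℤ)
    (hα : ∃ i, 2 ≤ |α i|) (t : EuclideanSpace ℝ (Fin n)) :
    ∑ i : Fin n, psiT n η (intoE n (Pi.single i 1)) ((α i : ℝ) • t)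
      ≤ psiT n η (intoE n α) t := by
  rcases eq_or_ne t 0 with rfl | ht
  · simp [psiT]
  have hτ : 0 < ‖t‖ := norm_pos_iff.mpr ht
  obtain ⟨iw, hiw⟩ := hα
  obtain ⟨i₀, -, hi₀⟩ := Finset.exists_max_image (Finset.univ : Finset (Fin n))
    (fun i => |α i|) ⟨iw, Finset.mem_univ iw⟩
  have hi₀w : 2 ≤ |α i₀| := le_trans hiw (hi₀ iw (Finset.mem_univ iw))
  set τ := ‖t‖ with hτdef
  -- rewrite LHS
  have e1 : ∀ i : Fin n, psiT n η (intoE n (Pi.single i 1)) ((α i : ℝ) • t)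
      = |(α i : ℝ)| * (τ + η * (t i) ^ 2 / τ) := by
    intro i
    rw [psiT_smul, psiT_single hη0]
  rw [Finset.sum_congr rfl (fun i _ => e1 i)]
  -- pointwise bound by the max
  set M : ℝ := |(α i₀ : ℝ)| with hM
  have hMα : ∀ i, |(α i : ℝ)| ≤ M := by
    intro i
    rw [hM, ← Int.cast_abs, ← Int.cast_abs, Int.cast_le]
    exact hi₀ i (Finset.mem_univ i)
  have hM2 : 2 ≤ M := by
    rw [hM, ← Int.cast_abs]
    exact_mod_cast hi₀w
  have step1 : ∀ i : Fin n, |(α i : ℝ)| * (τ + η * (t i) ^ 2 / τ)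
      ≤ |(α i : ℝ)| * τ + M * (η * (t i) ^ 2 / τ) := by
    intro i
    have h1 : 0 ≤ η * (t i) ^ 2 / τ := by positivity
    have h2 := hMα i
    nlinarith [abs_nonneg ((α i : ℝ))]
  have step2 : ∑ i, |(α i : ℝ)| * (τ + η * (t i) ^ 2 / τ)
      ≤ (∑ i, |(α i : ℝ)|) * τ + M * η * τ := by
    calc ∑ i, |(α i : ℝ)| * (τ + η * (t i) ^ 2 / τ)
        ≤ ∑ i, (|(α i : ℝ)| * τ + M * (η * (t i) ^ 2 / τ)) :=
          Finset.sum_le_sum (fun i _ => step1 i)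
      _ = (∑ i, |(α i : ℝ)|) * τ + M * η * (∑ i, (t i) ^ 2) / τ := by
          rw [Finset.sum_add_distrib, ← Finset.sum_mul]
          congr 1
          rw [eq_div_iff (ne_of_gt hτ), Finset.sum_mul, Finset.mul_sum]
          apply Finset.sum_congr rfl
          intro i _
          field_simp
      _ = (∑ i, |(α i : ℝ)|) * τ + M * η * τ := by
          rw [← norm_sq_eq_sum]
          congr 1
          field_simp
          ring
  -- RHS lower bound
  have rhs1 : τ * (∑ i, ((α i : ℝ)) ^ 2) ≤ psiT n η (intoE n α) t := by
    unfold psiT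
    have h1 : ‖intoE n α‖ ^ 2 = ∑ i, ((α i : ℝ)) ^ 2 := by
      rw [norm_sq_eq_sum]; simp [intoE]
    have h2 : 0 ≤ η * (inner ℝ (intoE n α) t : ℝ) ^ 2 / ‖t‖ := by positivity
    rw [h1]
    rw [← hτdef]
    nlinarith
  -- integer inequality
  have intineq : (∑ i, |(α i : ℝ)|) + M ≤ ∑ i, ((α i : ℝ)) ^ 2 := by
    have hZ : (∑ i, |α i|) + |α i₀| ≤ ∑ i, (α i) ^ 2 := by
      have h1 : ∀ i : Fin n, 0 ≤ (α i) ^ 2 - |α i| := by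
        intro i
        nlinarith [abs_nonneg (α i), sq_abs (α i), abs_nonneg (α i)]
      have h2 : (α i₀) ^ 2 - |α i₀| ≤ ∑ i, ((α i) ^ 2 - |α i|) :=
        Finset.single_le_sum (fun i _ => h1 i) (Finset.mem_univ i₀)
      have h3 : |α i₀| ≤ (α i₀) ^ 2 - |α i₀| := by
        nlinarith [sq_abs (α i₀)]
      rw [Finset.sum_sub_distrib] at h2
      linarith
    calc (∑ i, |(α i : ℝ)|) + M = (((∑ i, |α i|) + |α i₀| : ℤ) : ℝ) := by
          push_cast [Int.cast_abs]
          simp [hM, Int.cast_abs]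
      _ ≤ ((∑ i, (α i) ^ 2 : ℤ) : ℝ) := by exact_mod_cast hZ
      _ = ∑ i, ((α i : ℝ)) ^ 2 := by push_cast; ring
  -- combine
  have final : (∑ i, |(α i : ℝ)|) * τ + M * η * τ ≤ τ * (∑ i, ((α i : ℝ)) ^ 2) := by
    have hMη : M * η ≤ M := by nlinarith
    nlinarith [hτ]
  linarith [step2, rhs1, final]


set_option maxHeartbeats 1000000 in
lemma psiT_add_le (hη0 : 0 ≤ η) (hη1 : η ≤ 1) (b S T : EuclideanSpace ℝ (Fin n)) :
    psiT n η b (S + T) ≤ psiT n η b S + psiT n η b T := by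
  have psiT_nonneg : ∀ V : EuclideanSpace ℝ (Fin n), 0 ≤ psiT n η b V := by
    intro V
    have h1 : (0:ℝ) ≤ ‖V‖ := norm_nonneg V
    have h2 : (0:ℝ) ≤ ‖b‖ := norm_nonneg b
    unfold psiT; positivity
  rcases eq_or_ne S 0 with rfl | hS
  · simp [psiT, psiT_nonneg]
  rcases eq_or_ne T 0 with rfl | hT
  · simp [psiT, psiT_nonneg]
  rcases eq_or_ne b 0 with rfl | hb
  · simp [psiT]
  rcases eq_or_ne (S + T) 0 with hST | hST
  · rw [hST]
    have h0 : psiT n η b 0 = 0 := by simp [psiT]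
    rw [h0]
    exact add_nonneg (psiT_nonneg S) (psiT_nonneg T)
  set B := ‖b‖ with hB
  set s := ‖S‖ with hs
  set t := ‖T‖ with ht
  set r := ‖S + T‖ with hr
  set x : ℝ := inner ℝ b S with hx
  set y : ℝ := inner ℝ b T with hy
  have hzeq : (inner ℝ b (S + T) : ℝ) = x + y := inner_add_right b S T
  set z : ℝ := x + y with hz
  have hBpos : 0 < B := norm_pos_iff.mpr hb
  have hspos : 0 < s := norm_pos_iff.mpr hS
  have htpos : 0 < t := norm_pos_iff.mpr hT
  have hrpos : 0 < r := norm_pos_iff.mpr hST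
  have hxa : |x| ≤ B * s := abs_real_inner_le_norm b S
  have hya : |y| ≤ B * t := abs_real_inner_le_norm b T
  have hza : |z| ≤ B * r := by
    rw [← hzeq]; exact abs_real_inner_le_norm b (S + T)
  have hrst : r ≤ s + t := norm_add_le S T
  have eST : psiT n η b (S + T) = r * B ^ 2 + η * z ^ 2 / r := by
    simp only [psiT]; rw [hzeq]
  have eS : psiT n η b S = s * B ^ 2 + η * x ^ 2 / s := by simp only [psiT]; rfl
  have eT : psiT n η b T = t * B ^ 2 + η * y ^ 2 / t := by simp only [psiT]; rfl
  clear_value B s t r x y z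
  clear hzeq hB hs ht hr hx hy hS hT hb hST
  rw [eST, eS, eT]
  -- per-term endpoint bound
  have per : ∀ (a m : ℝ), 0 ≤ a → 0 < m → a ≤ B * m →
      (1 + η) * (B * a) ≤ m * B ^ 2 + η * a ^ 2 / m := by
    intro a m ha0 hm hu
    rw [← sub_nonneg]
    have key : m * B ^ 2 + η * a ^ 2 / m - (1 + η) * (B * a)
        = (B * m - a) * (B * m - η * a) / m := by field_simp; ring
    rw [key]
    apply div_nonneg _ hm.le
    have h3 : η * a ≤ B * m := le_trans (by nlinarith) hu
    nlinarith
  -- Cauchy-Schwarz fraction bound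
  have cauchy : z ^ 2 / (s + t) ≤ x ^ 2 / s + y ^ 2 / t := by
    rw [div_add_div _ _ (ne_of_gt hspos) (ne_of_gt htpos),
      div_le_div_iff₀ (by positivity) (by positivity), hz]
    nlinarith [sq_nonneg (x * t - y * s)]
  rcases eq_or_ne z 0 with hz0 | hz0
  · rw [hz0]
    have h1 : 0 ≤ η * x ^ 2 / s := by positivity
    have h2 : 0 ≤ η * y ^ 2 / t := by positivity
    have h3 : η * (0:ℝ) ^ 2 / r = 0 := by norm_num
    rw [h3]
    nlinarith
  · have hapos : 0 < |z| / B := by positivity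
    have har : |z| / B ≤ r := (div_le_iff₀' hBpos).mpr hza
    have hMa : B ^ 2 * (|z| / B) + (η * z ^ 2) / (|z| / B)
        = (1 + η) * (B * |z|) := by
      have habs : |z| ≠ 0 := abs_ne_zero.mpr hz0
      field_simp
      rw [← sq_abs z]
      ring
    have hA : B ^ 2 * (|z| / B) + (η * z ^ 2) / (|z| / B)
        ≤ (s * B ^ 2 + η * x ^ 2 / s) + (t * B ^ 2 + η * y ^ 2 / t) := by
      rw [hMa]
      have e1 : η * x ^ 2 / s = η * |x| ^ 2 / s := by rw [sq_abs]
      have e2 : η * y ^ 2 / t = η * |y| ^ 2 / t := by rw [sq_abs]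
      rw [e1, e2]
      have h1 := per |x| s (abs_nonneg x) hspos hxa
      have h2 := per |y| t (abs_nonneg y) htpos hya
      have h3 : |z| ≤ |x| + |y| := by rw [hz]; exact abs_add_le x y
      have h4 : B * |z| ≤ B * |x| + B * |y| := by
        have := mul_le_mul_of_nonneg_left h3 hBpos.le
        linarith [this]
      have h5 : (1 + η) * (B * |z|) ≤ (1 + η) * (B * |x| + B * |y|) :=
        mul_le_mul_of_nonneg_left h4 (by linarith)
      have h6 : (1 + η) * (B * |x| + B * |y|) = (1 + η) * (B * |x|) + (1 + η) * (B * |y|) := by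
        ring
      linarith
    have hC : B ^ 2 * (s + t) + (η * z ^ 2) / (s + t)
        ≤ (s * B ^ 2 + η * x ^ 2 / s) + (t * B ^ 2 + η * y ^ 2 / t) := by
      have h1 : (η * z ^ 2) / (s + t) = η * (z ^ 2 / (s + t)) := by ring
      have h2 : η * (z ^ 2 / (s + t)) ≤ η * (x ^ 2 / s + y ^ 2 / t) :=
        mul_le_mul_of_nonneg_left cauchy hη0
      have h3 : η * (x ^ 2 / s + y ^ 2 / t) = η * x ^ 2 / s + η * y ^ 2 / t := by ring
      rw [h1]
      linarith
    have := interp (B ^ 2) (η * z ^ 2) (|z| / B) (s + t) r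
      ((s * B ^ 2 + η * x ^ 2 / s) + (t * B ^ 2 + η * y ^ 2 / t))
      (by positivity) (by positivity) hapos har hrst hA hC
    linarith

lemma psiT_sum_le (hη0 : 0 ≤ η) (hη1 : η ≤ 1)
    (b : EuclideanSpace ℝ (Fin n)) {ι : Type*} (s : Finset ι)
    (f : ι → EuclideanSpace ℝ (Fin n)) :
    psiT n η b (∑ i ∈ s, f i) ≤ ∑ i ∈ s, psiT n η b (f i) := by
  induction s using Finset.cons_induction with
  | empty => simp [psiT]
  | cons a s ha ih =>
    rw [Finset.sum_cons, Finset.sum_cons]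
    exact le_trans (psiT_add_le hη0 hη1 b _ _) (by linarith)



noncomputable def Mof (n : ℕ) (α : Fin n → ℤ) (v : EuclideanSpace ℝ (Fin n)) :
    Matrix (Fin n) (Fin n) ℝ :=
  Matrix.of fun i j => (α i : ℝ) * v j

lemma Mof_zero (α : Fin n → ℤ) : Mof n α 0 = 0 := by
  ext i j
  simp [Mof]

lemma Mof_add (α : Fin n → ℤ) (v w : EuclideanSpace ℝ (Fin n)) :
    Mof n α (v + w) = Mof n α v + Mof n α w := by
  ext i j
  simp [Mof, PiLp.add_apply, mul_add]

lemma Mof_smul (α : Fin n → ℤ) (c : ℝ) (v : EuclideanSpace ℝ (Fin n)) :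
    Mof n α (c • v) = c • Mof n α v := by
  ext i j
  simp [Mof, PiLp.smul_apply, smul_eq_mul]
  ring

lemma Mof_sum (α : Fin n → ℤ) {ι : Type*} (s : Finset ι)
    (f : ι → EuclideanSpace ℝ (Fin n)) :
    Mof n α (∑ i ∈ s, f i) = ∑ i ∈ s, Mof n α (f i) := by
  induction s using Finset.cons_induction with
  | empty => simp [Mof_zero]
  | cons a s ha ih => rw [Finset.sum_cons, Finset.sum_cons, Mof_add, ih]

lemma Mof_single_sum (α : Fin n → ℤ) (t : EuclideanSpace ℝ (Fin n)) :
    ∑ i : Fin n, (α i : ℝ) • Mof n (Pi.single i 1) t = Mof n α t := by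
  ext k j
  simp [Mof, Matrix.sum_apply, Matrix.smul_apply, smul_eq_mul, Pi.single_apply,
    mul_ite, ite_mul, Finset.sum_ite_eq]

set_option maxHeartbeats 2000000 in
/-- Reduction to small multiplicities, `2 ≤ n ≤ 9`: every finitely supported
`T : ℤⁿ → ℝⁿ` can be replaced by `T'` vanishing whenever `max_i |α_i| ≥ 2`,
with the same first moment `∑ α ⊗ T_α` and no larger energy. -/
theorem reduce_multiplicity_small_n (n : ℕ) (hn2 : 2 ≤ n) (hn9 : n ≤ 9)
    (η : ℝ) (hη : η ∈ Set.Icc (0 : ℝ) 1)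
    (T : (Fin n → ℤ) → EuclideanSpace ℝ (Fin n))
    (hT : (Function.support T).Finite) :
    ∃ T' : (Fin n → ℤ) → EuclideanSpace ℝ (Fin n),
      (Function.support T').Finite ∧
      (∀ α : Fin n → ℤ, (∃ i, 2 ≤ |α i|) → T' α = 0) ∧
      (∑ᶠ α : Fin n → ℤ, (Matrix.of fun i j => (α i : ℝ) * T' α j : Matrix (Fin n) (Fin n) ℝ)) =
        (∑ᶠ α : Fin n → ℤ, (Matrix.of fun i j => (α i : ℝ) * T α j : Matrix (Fin n) (Fin n) ℝ)) ∧
      (∑ᶠ α : Fin n → ℤ, psiT n η (intoE n α) (T' α)) ≤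
        (∑ᶠ α : Fin n → ℤ, psiT n η (intoE n α) (T α)) := by
  classical
  obtain ⟨hη0, hη1⟩ := hη
  have ee_inj : Function.Injective (fun i : Fin n => (Pi.single i 1 : Fin n → ℤ)) := by
    intro i j h
    by_contra hij
    have h1 := congrFun h i
    simp [Pi.single_apply, hij] at h1
  set A : Finset (Fin n → ℤ) :=
    hT.toFinset ∪ Finset.image (fun i : Fin n => (Pi.single i 1 : Fin n → ℤ)) Finset.univ
    with hAdef
  have heeA : ∀ i : Fin n, (Pi.single i 1 : Fin n → ℤ) ∈ A := fun i =>
    Finset.mem_union_right _ (Finset.mem_image_of_mem _ (Finset.mem_univ i))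
  have hTA : ∀ β, β ∉ A → T β = 0 := by
    intro β hβ
    by_contra h
    exact hβ (Finset.mem_union_left _ (hT.mem_toFinset.mpr h))
  set Abig : Finset (Fin n → ℤ) := A.filter (fun β => ∃ i, 2 ≤ |β i|) with hAbigdef
  have hbig_single : ∀ i : Fin n, ¬ (∃ j, 2 ≤ |(Pi.single i 1 : Fin n → ℤ) j|) := by
    rintro i ⟨j, hj⟩
    rw [Pi.single_apply] at hj
    split_ifs at hj <;> simp at hj
  set Sm : Fin n → EuclideanSpace ℝ (Fin n) :=
    fun i => ∑ α ∈ Abig, (α i : ℝ) • T α with hSmdef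
  set g : (Fin n → ℤ) → EuclideanSpace ℝ (Fin n) :=
    fun β => ∑ i : Fin n, (if (Pi.single i 1 : Fin n → ℤ) = β then Sm i else 0) with hgdef
  set T' : (Fin n → ℤ) → EuclideanSpace ℝ (Fin n) :=
    fun β => (if ∃ i, 2 ≤ |β i| then 0 else T β) + g β with hT'def
  have hg0 : ∀ β, (∀ i : Fin n, (Pi.single i 1 : Fin n → ℤ) ≠ β) → g β = 0 := by
    intro β hβ
    simp only [hgdef]
    exact Finset.sum_eq_zero (fun i _ => if_neg (hβ i))
  have hgsingle : ∀ i : Fin n, g (Pi.single i 1) = Sm i := by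
    intro i
    simp only [hgdef]
    rw [Finset.sum_eq_single i]
    · rw [if_pos rfl]
    · intro j _ hj
      exact if_neg (fun h => hj (ee_inj h))
    · intro h
      exact absurd (Finset.mem_univ i) h
  have hT'0 : ∀ β, β ∉ A → T' β = 0 := by
    intro β hβ
    have h1 : T β = 0 := hTA β hβ
    have h2 : ∀ i : Fin n, (Pi.single i 1 : Fin n → ℤ) ≠ β := fun i h => hβ (h ▸ heeA i)
    simp only [hT'def]
    rw [hg0 β h2, h1, add_zero]
    split_ifs <;> rfl
  refine ⟨T', ?_, ?_, ?_, ?_⟩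
  · -- finite support
    apply Set.Finite.subset A.finite_toSet
    intro β hβ
    rw [Function.mem_support] at hβ
    by_contra hβA
    exact hβ (hT'0 β hβA)
  · -- vanishing on big multi-indices
    intro α hα
    have h2 : ∀ i : Fin n, (Pi.single i 1 : Fin n → ℤ) ≠ α := by
      intro i h
      exact hbig_single i (by rw [h]; exact hα)
    simp only [hT'def]
    rw [hg0 α h2, if_pos hα, add_zero]
  · -- first moment equality
    have hMrfl : ∀ f : (Fin n → ℤ) → EuclideanSpace ℝ (Fin n),
        (∑ᶠ α : Fin n → ℤ, (Matrix.of fun i j => (α i : ℝ) * f α j : Matrix (Fin n) (Fin n) ℝ))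
          = ∑ᶠ α : Fin n → ℤ, Mof n α (f α) := fun f => rfl
    rw [hMrfl T', hMrfl T]
    have hsupp1 : (Function.support fun α => Mof n α (T' α)) ⊆ ↑A := by
      intro β hβ
      rw [Function.mem_support] at hβ
      by_contra hβA
      exact hβ (by rw [hT'0 β hβA]; exact Mof_zero β)
    have hsupp2 : (Function.support fun α => Mof n α (T α)) ⊆ ↑A := by
      intro β hβ
      rw [Function.mem_support] at hβ
      by_contra hβA
      exact hβ (by rw [hTA β hβA]; exact Mof_zero β)
    rw [finsum_eq_finset_sum_of_support_subset _ hsupp1,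
      finsum_eq_finset_sum_of_support_subset _ hsupp2]
    calc ∑ β ∈ A, Mof n β (T' β)
        = ∑ β ∈ A, ((if ∃ i, 2 ≤ |β i| then 0 else Mof n β (T β)) +
            ∑ i : Fin n, (if (Pi.single i 1 : Fin n → ℤ) = β
              then Mof n (Pi.single i 1) (Sm i) else 0)) := by
          apply Finset.sum_congr rfl
          intro β _
          simp only [hT'def, hgdef]
          rw [Mof_add]
          congr 1
          · split_ifs with h
            · exact Mof_zero β
            · rfl
          · rw [Mof_sum]
            apply Finset.sum_congr rfl
            intro i _
            split_ifs with h
            · rw [h]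
            · exact Mof_zero β
      _ = (∑ β ∈ A.filter (fun β => ¬ ∃ i, 2 ≤ |β i|), Mof n β (T β)) +
            ∑ i : Fin n, Mof n (Pi.single i 1) (Sm i) := by
          rw [Finset.sum_add_distrib]
          congr 1
          · rw [Finset.sum_filter]
            apply Finset.sum_congr rfl
            intro β _
            rw [ite_not]
          · rw [Finset.sum_comm]
            apply Finset.sum_congr rfl
            intro i _
            rw [Finset.sum_ite_eq A (Pi.single i 1)
              (fun _ => Mof n (Pi.single i 1) (Sm i)), if_pos (heeA i)]
      _ = (∑ β ∈ A.filter (fun β => ¬ ∃ i, 2 ≤ |β i|), Mof n β (T β)) +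
            ∑ α ∈ Abig, Mof n α (T α) := by
          congr 1
          calc ∑ i : Fin n, Mof n (Pi.single i 1) (Sm i)
              = ∑ i : Fin n, ∑ α ∈ Abig, (α i : ℝ) • Mof n (Pi.single i 1) (T α) := by
                apply Finset.sum_congr rfl
                intro i _
                simp only [hSmdef]
                rw [Mof_sum]
                apply Finset.sum_congr rfl
                intro α _
                rw [Mof_smul]
            _ = ∑ α ∈ Abig, ∑ i : Fin n, (α i : ℝ) • Mof n (Pi.single i 1) (T α) :=
                Finset.sum_comm
            _ = ∑ α ∈ Abig, Mof n α (T α) := by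
                apply Finset.sum_congr rfl
                intro α _
                exact Mof_single_sum α (T α)
      _ = ∑ β ∈ A, Mof n β (T β) := by
          rw [hAbigdef, add_comm]
          exact Finset.sum_filter_add_sum_filter_not A _ _
  · -- energy inequality
    have hsupp1 : (Function.support fun α => psiT n η (intoE n α) (T' α)) ⊆ ↑A := by
      intro β hβ
      rw [Function.mem_support] at hβ
      by_contra hβA
      exact hβ (by rw [hT'0 β hβA]; exact psiT_zero _)
    have hsupp2 : (Function.support fun α => psiT n η (intoE n α) (T α)) ⊆ ↑A := by
      intro β hβ
      rw [Function.mem_support] at hβ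
      by_contra hβA
      exact hβ (by rw [hTA β hβA]; exact psiT_zero _)
    rw [finsum_eq_finset_sum_of_support_subset _ hsupp1,
      finsum_eq_finset_sum_of_support_subset _ hsupp2]
    have step1 : ∑ β ∈ A, psiT n η (intoE n β) (T' β)
        ≤ ∑ β ∈ A, (psiT n η (intoE n β) (if ∃ i, 2 ≤ |β i| then 0 else T β)
            + psiT n η (intoE n β) (g β)) := by
      apply Finset.sum_le_sum
      intro β _
      simp only [hT'def]
      exact psiT_add_le hη0 hη1 _ _ _
    have e1 : ∑ β ∈ A, psiT n η (intoE n β) (if ∃ i, 2 ≤ |β i| then 0 else T β)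
        = ∑ β ∈ A.filter (fun β => ¬ ∃ i, 2 ≤ |β i|), psiT n η (intoE n β) (T β) := by
      rw [Finset.sum_filter]
      apply Finset.sum_congr rfl
      intro β _
      split_ifs with h
      · exact psiT_zero _
      · rfl
    have e2 : ∑ β ∈ A, psiT n η (intoE n β) (g β)
        ≤ ∑ α ∈ Abig, psiT n η (intoE n α) (T α) := by
      have himg : Finset.image (fun i : Fin n => (Pi.single i 1 : Fin n → ℤ)) Finset.univ ⊆ A :=
        fun β hβ => Finset.mem_union_right _ hβ
      have hvan : ∀ β ∈ A,
          β ∉ Finset.image (fun i : Fin n => (Pi.single i 1 : Fin n → ℤ)) Finset.univ →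
          psiT n η (intoE n β) (g β) = 0 := by
        intro β _ hβim
        have h2 : ∀ i : Fin n, (Pi.single i 1 : Fin n → ℤ) ≠ β := by
          intro i h
          exact hβim (h ▸ Finset.mem_image_of_mem _ (Finset.mem_univ i))
        rw [hg0 β h2]
        exact psiT_zero _
      rw [← Finset.sum_subset himg hvan,
        Finset.sum_image (fun i _ j _ h => ee_inj h)]
      have h2 : ∀ i : Fin n, psiT n η (intoE n (Pi.single i 1)) (g (Pi.single i 1))
          ≤ ∑ α ∈ Abig, psiT n η (intoE n (Pi.single i 1)) ((α i : ℝ) • T α) := by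
        intro i
        rw [hgsingle i]
        simp only [hSmdef]
        exact psiT_sum_le hη0 hη1 _ _ _
      calc ∑ i : Fin n, psiT n η (intoE n (Pi.single i 1)) (g (Pi.single i 1))
          ≤ ∑ i : Fin n, ∑ α ∈ Abig, psiT n η (intoE n (Pi.single i 1)) ((α i : ℝ) • T α) :=
            Finset.sum_le_sum (fun i _ => h2 i)
        _ = ∑ α ∈ Abig, ∑ i : Fin n, psiT n η (intoE n (Pi.single i 1)) ((α i : ℝ) • T α) :=
            Finset.sum_comm
        _ ≤ ∑ α ∈ Abig, psiT n η (intoE n α) (T α) := by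
            apply Finset.sum_le_sum
            intro α hα
            have hα' := hα
            rw [hAbigdef] at hα'
            have hαbig : ∃ i, 2 ≤ |α i| := (Finset.mem_filter.mp hα').2
            exact sum_psiT_single_le hη0 hη1 α hαbig (T α)
    calc ∑ β ∈ A, psiT n η (intoE n β) (T' β)
        ≤ (∑ β ∈ A.filter (fun β => ¬ ∃ i, 2 ≤ |β i|), psiT n η (intoE n β) (T β))
            + ∑ α ∈ Abig, psiT n η (intoE n α) (T α) := by
          rw [← e1]
          calc ∑ β ∈ A, psiT n η (intoE n β) (T' β)
              ≤ _ := step1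
            _ = _ := Finset.sum_add_distrib
            _ ≤ _ := by
                apply add_le_add_right e2
      _ = ∑ β ∈ A, psiT n η (intoE n β) (T β) := by
          rw [hAbigdef, add_comm]
          exact Finset.sum_filter_add_sum_filter_not A _ _
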